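/- arXiv:1707.04667 — 2 statements merged into one kernel-verified Lean document; each statement's English description precedes it below -/
import Mathlib

section
/- The double summation Σ_{i=1}^n (Σ_{k ≠ i} r_{i,k})² = 0 as an operator on P⁻. -/
/-!
Write `r_{i,k} = ∂_{i,k} s_{i,k}`. Conjugation by `s_{c,d}` transports `∂_{a,b}` to
`∂_{s(a),s(b)}`, so `r_{i,k}² = ∂_{i,k} ∂_{k,i} = ∂_{i,k}² = 0`, and for distinct `i, k, l`
`r_{i,k} r_{i,l} = ∂_{i,k} ∂_{k,l} s_{i,k} s_{i,l}`. The product `s_{i,k} s_{i,l}` is a 3-cycle,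
unchanged when `(i, k, l)` is rotated, and `∂_{i,k}∂_{k,l} + ∂_{k,l}∂_{l,i} + ∂_{l,i}∂_{i,k} = 0`;
so after expanding the squares the terms cancel in rotation orbits of three.

Every identity between divided differences is checked on monomials through the recursion
`∂_{a,b}(x_j g) = [j ∈ {a, b}] g - x_{s_{a,b}(j)} ∂_{a,b}(g)`, which determines `∂_{a,b}`.
-/

noncomputable section

/-- The defining relations of the skew polynomial ring
`P⁻ = ℂ⟨x₁,…,xₙ⟩/⟨xᵢxⱼ + xⱼxᵢ : i ≠ j⟩`. -/
inductive SkewRel (n : ℕ) : FreeAlgebra ℂ (Fin n) → FreeAlgebra ℂ (Fin n) → Prop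
  | anticomm (i j : Fin n) (h : i ≠ j) :
      SkewRel n (FreeAlgebra.ι ℂ i * FreeAlgebra.ι ℂ j)
        (-(FreeAlgebra.ι ℂ j * FreeAlgebra.ι ℂ i))

/-- The skew polynomial ring `P⁻`. -/
abbrev SkewPoly (n : ℕ) := RingQuot (SkewRel n)

/-- The generators `xᵢ` of `P⁻`. -/
def X {n : ℕ} (i : Fin n) : SkewPoly n :=
  RingQuot.mkAlgHom ℂ (SkewRel n) (FreeAlgebra.ι ℂ i)

/-- `f ∈ P⁻` is homogeneous of degree `d`: it lies in the span of the degree-`d` monomials. -/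
def IsHomog {n : ℕ} (d : ℕ) (f : SkewPoly n) : Prop :=
  f ∈ Submodule.span ℂ
    {m : SkewPoly n | ∃ w : List (Fin n), w.length = d ∧ m = (w.map X).prod}

/-- The operator of left multiplication by `xᵢ` on `P⁻`. -/
def mulX {n : ℕ} (i : Fin n) : Module.End ℂ (SkewPoly n) :=
  LinearMap.mulLeft ℂ (X i)

theorem Equiv.swap_mul_swap_rotate {α : Type*} [DecidableEq α] {x y z : α}
    (hxy : x ≠ y) (hyz : y ≠ z) (hzx : z ≠ x) :
    Equiv.swap x y * Equiv.swap y z = Equiv.swap y z * Equiv.swap z x := by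
  ext j
  simp only [Equiv.Perm.mul_apply, Equiv.swap_apply_def]
  split_ifs <;> simp_all

theorem Finset.sum_sum_sum_eq_zero_of_rotate {ι 𝕜 M : Type*} [Fintype ι] [Field 𝕜] [CharZero 𝕜]
    [AddCommGroup M] [Module 𝕜 M] (G : ι → ι → ι → M)
    (hG : ∀ i k l, G i k l + G k l i + G l i k = 0) : ∑ i, ∑ k, ∑ l, G i k l = 0 := by
  have rotate (F : ι → ι → ι → M) : ∑ i, ∑ k, ∑ l, F k l i = ∑ i, ∑ k, ∑ l, F i k l :=
    Finset.sum_comm.trans (Finset.sum_congr rfl fun _ _ => Finset.sum_comm)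
  have h3 : (3 : 𝕜) • ∑ i, ∑ k, ∑ l, G i k l = 0 := by
    calc (3 : 𝕜) • ∑ i, ∑ k, ∑ l, G i k l
        = ∑ i, ∑ k, ∑ l, G i k l + ∑ i, ∑ k, ∑ l, G k l i + ∑ i, ∑ k, ∑ l, G l i k := by
          rw [rotate fun i k l => G k l i, rotate G]; module
      _ = 0 := by simp only [← Finset.sum_add_distrib, hG, Finset.sum_const_zero]
  exact (smul_eq_zero.mp h3).resolve_left three_ne_zero

theorem Finset.sum_sq_sum_sdiff_eq_zero {ι 𝕜 A : Type*} [Fintype ι] [DecidableEq ι] [Field 𝕜]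
    [CharZero 𝕜] [Ring A] [Module 𝕜 A] (r : ι → ι → A)
    (h_sq : ∀ i k, i ≠ k → r i k * r i k = 0)
    (h_cyc : ∀ i k l, i ≠ k → k ≠ l → l ≠ i →
      r i k * r i l + r k l * r k i + r l i * r l k = 0) :
    ∑ i, (∑ k ∈ Finset.univ \ {i}, r i k) ^ 2 = 0 := by
  set G : ι → ι → ι → A := fun i k l => if i ≠ k ∧ k ≠ l ∧ l ≠ i then r i k * r i l else 0
  have h_expand (i : ι) : (∑ k ∈ Finset.univ \ {i}, r i k) ^ 2 = ∑ k, ∑ l, G i k l := by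
    have hG (k l : ι) (hk : k ≠ i) (hl : l ≠ i) : G i k l = r i k * r i l := by
      by_cases hkl : k = l
      · subst hkl; simp [G, h_sq i k (Ne.symm hk)]
      · simp [G, hk.symm, hkl, hl]
    have hG_left (l : ι) : G i i l = 0 := if_neg (by simp)
    have hG_right (k : ι) : G i k i = 0 := if_neg (by simp)
    rw [sq, Finset.sum_mul_sum, Finset.sum_eq_add_sum_sdiff_singleton_of_mem (Finset.mem_univ i)]
    simp only [hG_left, Finset.sum_const_zero, zero_add]
    refine Finset.sum_congr rfl fun k hk => ?_
    rw [Finset.sum_eq_add_sum_sdiff_singleton_of_mem (Finset.mem_univ i), hG_right, zero_add]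
    exact Finset.sum_congr rfl fun l hl => (hG k l (by simpa using hk) (by simpa using hl)).symm
  rw [Finset.sum_congr rfl fun i _ => h_expand i]
  refine Finset.sum_sum_sum_eq_zero_of_rotate (𝕜 := 𝕜) G fun i k l => ?_
  by_cases h : i ≠ k ∧ k ≠ l ∧ l ≠ i
  · obtain ⟨hik, hkl, hli⟩ := h
    simpa [G, hik, hkl, hli] using h_cyc i k l hik hkl hli
  · have h' : ¬ (k ≠ l ∧ l ≠ i ∧ i ≠ k) := by tauto
    have h'' : ¬ (l ≠ i ∧ i ≠ k ∧ k ≠ l) := by tauto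
    simp only [G, if_neg h, if_neg h', if_neg h'', add_zero]

namespace SkewPoly

variable {n : ℕ}

theorem induction_on {motive : SkewPoly n → Prop} (x : SkewPoly n)
    (algebraMap : ∀ c : ℂ, motive (algebraMap ℂ (SkewPoly n) c))
    (X : ∀ j, motive (X j))
    (mul : ∀ a b, motive a → motive b → motive (a * b))
    (add : ∀ a b, motive a → motive b → motive (a + b)) : motive x := by
  obtain ⟨x, rfl⟩ := RingQuot.mkAlgHom_surjective ℂ (SkewRel n) x
  induction x using FreeAlgebra.induction with
  | grade0 c => simpa only [AlgHom.commutes] using algebraMap c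
  | grade1 j => exact X j
  | mul a b ha hb => simpa only [map_mul] using mul _ _ ha hb
  | add a b ha hb => simpa only [map_add] using add _ _ ha hb

theorem algHom_ext {A : Type*} [Semiring A] [Algebra ℂ A] {f g : SkewPoly n →ₐ[ℂ] A}
    (h : ∀ j, f (X j) = g (X j)) : f = g :=
  RingQuot.ringQuot_ext' ℂ f g (FreeAlgebra.hom_ext (funext h))

theorem linearMap_eq_zero {M : Type*} [AddCommGroup M] [Module ℂ M]
    (T : SkewPoly n →ₗ[ℂ] M) (h_one : T 1 = 0)
    (h_mul : ∀ j g, T g = 0 → T (X j * g) = 0) : T = 0 := by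
  suffices h : ∀ x y, T y = 0 → T (x * y) = 0 by
    ext x
    simpa using h x 1 h_one
  intro x
  induction x using induction_on with
  | algebraMap c => intro y hy; rw [← Algebra.smul_def, map_smul, hy, smul_zero]
  | X j => exact h_mul j
  | mul a b ha hb => intro y hy; rw [mul_assoc]; exact ha _ (hb y hy)
  | add a b ha hb => intro y hy; rw [add_mul, map_add, ha y hy, hb y hy, add_zero]

theorem toLinearMap_mul_toLinearMap_eq {σ₁ σ₂ τ₁ τ₂ : SkewPoly n →ₐ[ℂ] SkewPoly n}
    (h : ∀ j, σ₁ (σ₂ (X j)) = τ₁ (τ₂ (X j))) :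
    σ₁.toLinearMap * σ₂.toLinearMap = τ₁.toLinearMap * τ₂.toLinearMap :=
  LinearMap.ext (AlgHom.congr_fun (algHom_ext (f := σ₁.comp σ₂) (g := τ₁.comp τ₂) h))

def pairInd (a b j : Fin n) : ℂ := if j = a ∨ j = b then 1 else 0

theorem pairInd_comm (a b j : Fin n) : pairInd a b j = pairInd b a j := by
  simp only [pairInd, or_comm]

theorem pairInd_perm_symm_apply (π : Equiv.Perm (Fin n)) (a b j : Fin n) :
    pairInd a b (π.symm j) = pairInd (π a) (π b) j := by
  simp only [pairInd, Equiv.symm_apply_eq]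

theorem pairInd_swap_apply (a b c d j : Fin n) :
    pairInd a b (Equiv.swap c d j) = pairInd (Equiv.swap c d a) (Equiv.swap c d b) j :=
  pairInd_perm_symm_apply (Equiv.swap c d) a b j

structure IsOddDivDiff (D : Module.End ℂ (SkewPoly n)) (a b : Fin n) : Prop where
  map_one : D 1 = 0
  map_X_mul : ∀ j g, D (X j * g) = pairInd a b j • g - X (Equiv.swap a b j) * D g

namespace IsOddDivDiff

variable {D D' : Module.End ℂ (SkewPoly n)} {a b c d : Fin n}

theorem of_leibniz {σ : SkewPoly n →ₐ[ℂ] SkewPoly n} (hσ : ∀ j, σ (X j) = X (Equiv.swap a b j))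
    (hDa : D (X a) = 1) (hDb : D (X b) = 1) (hD : ∀ j, j ≠ a → j ≠ b → D (X j) = 0)
    (hL : ∀ (d : ℕ) (f g : SkewPoly n), IsHomog d f →
      D (f * g) = D f * g + (-1 : ℂ) ^ d • (σ f * D g)) :
    IsOddDivDiff D a b where
  map_one := by
    have h := hL 0 1 1 (Submodule.subset_span ⟨[], rfl, by simp⟩)
    simpa using h
  map_X_mul j g := by
    have hX : D (X j) = pairInd a b j • 1 := by
      unfold pairInd
      split_ifs with hj
      · rcases hj with rfl | rfl <;> simp [hDa, hDb]
      · obtain ⟨hja, hjb⟩ := not_or.mp hj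
        simp [hD j hja hjb]
    rw [hL 1 (X j) g (Submodule.subset_span ⟨[j], rfl, by simp⟩), hX, hσ, smul_one_mul]
    module

theorem ext (hD : IsOddDivDiff D a b) (hD' : IsOddDivDiff D' a b) : D = D' := by
  rw [← sub_eq_zero]
  refine linearMap_eq_zero _ (by simp [hD.map_one, hD'.map_one]) fun j g hg => ?_
  rw [LinearMap.sub_apply, sub_eq_zero] at hg ⊢
  rw [hD.map_X_mul, hD'.map_X_mul, hg]

theorem symm (hD : IsOddDivDiff D a b) : IsOddDivDiff D b a where
  map_one := hD.map_one
  map_X_mul j g := by rw [hD.map_X_mul, pairInd_comm, Equiv.swap_comm]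

theorem conj (hD : IsOddDivDiff D a b) {σ τ : SkewPoly n →ₐ[ℂ] SkewPoly n}
    (π : Equiv.Perm (Fin n)) (hσ : ∀ j, σ (X j) = X (π j)) (hτ : ∀ j, τ (X j) = X (π.symm j)) :
    IsOddDivDiff (σ.toLinearMap * D * τ.toLinearMap) (π a) (π b) where
  map_one := by simp [hD.map_one]
  map_X_mul j g := by
    have hστ : σ.comp τ = AlgHom.id ℂ (SkewPoly n) := algHom_ext fun j => by simp [hτ, hσ]
    have hπ : π (Equiv.swap a b (π.symm j)) = Equiv.swap (π a) (π b) j := by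
      rw [Equiv.swap_apply_apply]; rfl
    simp only [Module.End.mul_apply, AlgHom.toLinearMap_apply, map_mul, hτ, hD.map_X_mul,
      map_sub, map_smul, hσ, hπ, pairInd_perm_symm_apply]
    rw [← AlgHom.comp_apply σ τ, hστ, AlgHom.id_apply]

theorem map_map_X_mul (hD : IsOddDivDiff D a b) (hD' : IsOddDivDiff D' c d) (j : Fin n)
    (g : SkewPoly n) :
    D (D' (X j * g)) = pairInd c d j • D g - pairInd a b (Equiv.swap c d j) • D' g
      + X (Equiv.swap a b (Equiv.swap c d j)) * D (D' g) := by
  rw [hD'.map_X_mul, map_sub, map_smul, hD.map_X_mul]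
  abel

theorem mul_self (hD : IsOddDivDiff D a b) : D * D = 0 :=
  linearMap_eq_zero _ (by simp [hD.map_one]) fun j g hg => by
    rw [Module.End.mul_apply] at hg ⊢
    rw [hD.map_map_X_mul hD, pairInd_swap_apply, Equiv.swap_apply_left, Equiv.swap_apply_right,
      pairInd_comm b, Equiv.swap_apply_self, hg, mul_zero, sub_self, zero_add]

theorem cyclic_sum {D₁ D₂ D₃ : Module.End ℂ (SkewPoly n)} {i k l : Fin n}
    (hik : i ≠ k) (hkl : k ≠ l) (hli : l ≠ i) (h₁ : IsOddDivDiff D₁ i k)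
    (h₂ : IsOddDivDiff D₂ k l) (h₃ : IsOddDivDiff D₃ l i) :
    D₁ * D₂ + D₂ * D₃ + D₃ * D₁ = 0 := by
  refine linearMap_eq_zero _ (by simp [h₁.map_one, h₂.map_one, h₃.map_one]) fun j g hg => ?_
  simp only [LinearMap.add_apply, Module.End.mul_apply] at hg ⊢
  have hρ₁ : Equiv.swap i k (Equiv.swap k l j) = Equiv.swap k l (Equiv.swap l i j) := by
    rw [← Equiv.Perm.mul_apply, Equiv.swap_mul_swap_rotate hik hkl hli, Equiv.Perm.mul_apply]
  have hρ₂ : Equiv.swap l i (Equiv.swap i k j) = Equiv.swap k l (Equiv.swap l i j) := by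
    rw [← Equiv.Perm.mul_apply, Equiv.swap_mul_swap_rotate hli hik hkl,
      Equiv.swap_mul_swap_rotate hik hkl hli, Equiv.Perm.mul_apply]
  rw [h₁.map_map_X_mul h₂, h₂.map_map_X_mul h₃, h₃.map_map_X_mul h₁, hρ₁, hρ₂,
    pairInd_swap_apply, pairInd_swap_apply, pairInd_swap_apply]
  simp only [Equiv.swap_apply_left, Equiv.swap_apply_of_ne_of_ne hik hli.symm,
    Equiv.swap_apply_of_ne_of_ne hkl hik.symm, Equiv.swap_apply_of_ne_of_ne hli hkl.symm]
  rw [pairInd_comm i l, pairInd_comm k i, pairInd_comm l k,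
    ← mul_zero (X (Equiv.swap k l (Equiv.swap l i j))), ← hg, mul_add, mul_add]
  abel

end IsOddDivDiff

end SkewPoly

section DividedDifferences

open SkewPoly

variable {n : ℕ} {s : Fin n → Fin n → SkewPoly n →ₐ[ℂ] SkewPoly n}
  {pd : Fin n → Fin n → Module.End ℂ (SkewPoly n)}

theorem s_mul_s_self (hs : ∀ i k j, i ≠ k → s i k (X j) = X (Equiv.swap i k j)) {i k : Fin n}
    (hik : i ≠ k) : (s i k).toLinearMap * (s i k).toLinearMap = 1 :=
  toLinearMap_mul_toLinearMap_eq (τ₁ := AlgHom.id ℂ _) (τ₂ := AlgHom.id ℂ _)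
    fun j => by simp [hs _ _ _ hik]

theorem s_mul_s_rotate (hs : ∀ i k j, i ≠ k → s i k (X j) = X (Equiv.swap i k j))
    {i k l : Fin n} (hik : i ≠ k) (hkl : k ≠ l) (hli : l ≠ i) :
    (s i k).toLinearMap * (s i l).toLinearMap = (s k l).toLinearMap * (s k i).toLinearMap := by
  refine toLinearMap_mul_toLinearMap_eq fun j => ?_
  rw [hs _ _ _ hli.symm, hs _ _ _ hik, hs _ _ _ hik.symm, hs _ _ _ hkl, ← Equiv.Perm.mul_apply,
    ← Equiv.Perm.mul_apply, Equiv.swap_comm i k,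
    Equiv.swap_mul_swap_rotate hik.symm hli.symm hkl.symm,
    Equiv.swap_mul_swap_rotate hli.symm hkl.symm hik.symm, Equiv.swap_comm l k]

theorem s_mul_pd_mul_s (hs : ∀ i k j, i ≠ k → s i k (X j) = X (Equiv.swap i k j))
    (hpd : ∀ i k, i ≠ k → IsOddDivDiff (pd i k) i k) {a b c d : Fin n} (hab : a ≠ b)
    (hcd : c ≠ d) :
    (s c d).toLinearMap * pd a b * (s c d).toLinearMap =
      pd (Equiv.swap c d a) (Equiv.swap c d b) :=
  ((hpd a b hab).conj (Equiv.swap c d) (hs c d · hcd) (by simpa using (hs c d · hcd))).ext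
    (hpd _ _ ((Equiv.swap c d).injective.ne hab))

theorem pd_mul_s_mul_self (hs : ∀ i k j, i ≠ k → s i k (X j) = X (Equiv.swap i k j))
    (hpd : ∀ i k, i ≠ k → IsOddDivDiff (pd i k) i k) {i k : Fin n} (hik : i ≠ k) :
    pd i k * (s i k).toLinearMap * (pd i k * (s i k).toLinearMap) = 0 := by
  have hsym : pd k i = pd i k := ((hpd k i hik.symm).symm).ext (hpd i k hik)
  calc pd i k * (s i k).toLinearMap * (pd i k * (s i k).toLinearMap)
      = pd i k * ((s i k).toLinearMap * pd i k * (s i k).toLinearMap) := by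
        simp only [mul_assoc]
    _ = 0 := by
      rw [s_mul_pd_mul_s hs hpd hik hik, Equiv.swap_apply_left, Equiv.swap_apply_right, hsym,
        (hpd i k hik).mul_self]

theorem pd_mul_s_mul_pd_mul_s (hs : ∀ i k j, i ≠ k → s i k (X j) = X (Equiv.swap i k j))
    (hpd : ∀ i k, i ≠ k → IsOddDivDiff (pd i k) i k) {i k l : Fin n} (hik : i ≠ k) (hkl : k ≠ l)
    (hli : l ≠ i) :
    pd i k * (s i k).toLinearMap * (pd i l * (s i l).toLinearMap) =
      pd i k * pd k l * ((s i k).toLinearMap * (s i l).toLinearMap) := by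
  calc pd i k * (s i k).toLinearMap * (pd i l * (s i l).toLinearMap)
      = pd i k * ((s i k).toLinearMap * pd i l * (s i k).toLinearMap) *
          ((s i k).toLinearMap * (s i l).toLinearMap) := by
        simp only [mul_assoc]
        rw [← mul_assoc (s i k).toLinearMap (s i k).toLinearMap, s_mul_s_self hs hik, one_mul]
    _ = pd i k * pd k l * ((s i k).toLinearMap * (s i l).toLinearMap) := by
      rw [s_mul_pd_mul_s hs hpd hli.symm hik, Equiv.swap_apply_left,
        Equiv.swap_apply_of_ne_of_ne hli hkl.symm]

theorem pd_mul_s_cyclic_sum (hs : ∀ i k j, i ≠ k → s i k (X j) = X (Equiv.swap i k j))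
    (hpd : ∀ i k, i ≠ k → IsOddDivDiff (pd i k) i k) {i k l : Fin n} (hik : i ≠ k) (hkl : k ≠ l)
    (hli : l ≠ i) :
    pd i k * (s i k).toLinearMap * (pd i l * (s i l).toLinearMap) +
      pd k l * (s k l).toLinearMap * (pd k i * (s k i).toLinearMap) +
      pd l i * (s l i).toLinearMap * (pd l k * (s l k).toLinearMap) = 0 := by
  rw [pd_mul_s_mul_pd_mul_s hs hpd hik hkl hli, pd_mul_s_mul_pd_mul_s hs hpd hkl hli hik,
    pd_mul_s_mul_pd_mul_s hs hpd hli hik hkl, ← s_mul_s_rotate hs hik hkl hli,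
    s_mul_s_rotate hs hli hik hkl, ← add_mul, ← add_mul,
    (hpd i k hik).cyclic_sum hik hkl hli (hpd k l hkl) (hpd l i hli), zero_mul]

end DividedDifferences

theorem stmt7_general (n : ℕ)
    -- `s i k` is the algebra automorphism of `P⁻` swapping `xᵢ` and `x_k`
    (s : Fin n → Fin n → (SkewPoly n →ₐ[ℂ] SkewPoly n))
    (hs : ∀ i k j : Fin n, i ≠ k → s i k (X j) = X (Equiv.swap i k j))
    -- `pd i k` is the odd divided difference operator `∂_{i,k}`
    (pd : Fin n → Fin n → Module.End ℂ (SkewPoly n))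
    (hpdi : ∀ i k : Fin n, i ≠ k → pd i k (X i) = 1)
    (hpdk : ∀ i k : Fin n, i ≠ k → pd i k (X k) = 1)
    (hpd0 : ∀ i k j : Fin n, i ≠ k → j ≠ i → j ≠ k → pd i k (X j) = 0)
    (hpdL : ∀ i k : Fin n, i ≠ k → ∀ (d : ℕ) (f g : SkewPoly n), IsHomog d f →
      pd i k (f * g) = pd i k f * g + (-1 : ℂ) ^ d • (s i k f * pd i k g))
    -- `r i k = ∂_{i,k} ∘ s_{i,k}`
    (r : Fin n → Fin n → Module.End ℂ (SkewPoly n))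
    (hr : ∀ i k : Fin n, i ≠ k → r i k = pd i k ∘ₗ (s i k).toLinearMap)
 :
    ∑ i : Fin n, (∑ k ∈ Finset.univ \ {i}, r i k) ^ 2 = 0 := by
  have hpd : ∀ i k, i ≠ k → SkewPoly.IsOddDivDiff (pd i k) i k := fun i k hik =>
    .of_leibniz (hs i k · hik) (hpdi i k hik) (hpdk i k hik) (hpd0 i k · hik) (hpdL i k hik)
  have hr' : ∀ i k, i ≠ k → r i k = pd i k * (s i k).toLinearMap := hr
  refine Finset.sum_sq_sum_sdiff_eq_zero (𝕜 := ℂ) r (fun i k hik => ?_)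
    fun i k l hik hkl hli => ?_
  · rw [hr' i k hik]
    exact pd_mul_s_mul_self hs hpd hik
  · rw [hr' i k hik, hr' i l hli.symm, hr' k l hkl, hr' k i hik.symm, hr' l i hli, hr' l k hkl.symm]
    exact pd_mul_s_cyclic_sum hs hpd hik hkl hli

/-- The double summation `Σ_{i=1}^n (Σ_{k ≠ i} r_{i,k})² = 0` as an operator on `P⁻`. -/
theorem stmt7 (n : ℕ) (hn : 2 ≤ n)
    -- `s i k` is the algebra automorphism of `P⁻` swapping `xᵢ` and `x_k`
    (s : Fin n → Fin n → (SkewPoly n →ₐ[ℂ] SkewPoly n))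
    (hs : ∀ i k j : Fin n, i ≠ k → s i k (X j) = X (Equiv.swap i k j))
    -- `pd i k` is the odd divided difference operator `∂_{i,k}`
    (pd : Fin n → Fin n → Module.End ℂ (SkewPoly n))
    (hpdi : ∀ i k : Fin n, i ≠ k → pd i k (X i) = 1)
    (hpdk : ∀ i k : Fin n, i ≠ k → pd i k (X k) = 1)
    (hpd0 : ∀ i k j : Fin n, i ≠ k → j ≠ i → j ≠ k → pd i k (X j) = 0)
    (hpdL : ∀ i k : Fin n, i ≠ k → ∀ (d : ℕ) (f g : SkewPoly n), IsHomog d f →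
      pd i k (f * g) = pd i k f * g + (-1 : ℂ) ^ d • (s i k f * pd i k g))
    -- `r i k = ∂_{i,k} ∘ s_{i,k}`
    (r : Fin n → Fin n → Module.End ℂ (SkewPoly n))
    (hr : ∀ i k : Fin n, i ≠ k → r i k = pd i k ∘ₗ (s i k).toLinearMap)
 :
    ∑ i : Fin n, (∑ k ∈ Finset.univ \ {i}, r i k) ^ 2 = 0 :=
  stmt7_general n s hs pd hpdi hpdk hpd0 hpdL r hr
end
end

section
/- For each 1 ≤ i ≤ n, the operator identity x_i D_i + D_i x_i = 2t·x_i p_i + t + u Σ_{k ≠ i} s_{i,k} holds on P⁻. -/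
noncomputable section

/-!
The identity splits into its `t`- and `u`-parts. The operator `pᵢ` is an odd partial derivative
in `xᵢ`: on the ordered monomials, which span `P⁻`, left multiplication by `xᵢ` raises the
exponent of `xᵢ` with the same sign `(-1)^{λ₁+⋯+λ_{i-1}}` that `pᵢ` produces when lowering it,
so `pᵢ xᵢ - xᵢ pᵢ = 1`. For `k ≠ i`, the twisted Leibniz rule applied to `x_k · s_{i,k}(f)` gives
`∂_{i,k}(x_k g) = g - xᵢ ∂_{i,k}(g)`, which is exactly `xᵢ r_{i,k} + r_{i,k} xᵢ = s_{i,k}`.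
-/

theorem Submodule.eq_top_of_one_mem_of_mul_mem {R A : Type*} [CommSemiring R] [Semiring A]
    [Algebra R A] {s : Set A} (hs : Algebra.adjoin R s = ⊤) (S : Submodule R A) (h1 : 1 ∈ S)
    (hmul : ∀ a ∈ s, ∀ x ∈ S, a * x ∈ S) : S = ⊤ := by
  rw [eq_top_iff, ← Algebra.top_toSubmodule, ← hs, Algebra.adjoin_eq_span, Submodule.span_le]
  intro m hm
  induction hm using Submonoid.closure_induction_left with
  | one => exact h1
  | mul_left a ha x _ hx => exact hmul a ha x hx

theorem mulLeft_mul_add_mul_mulLeft_eq {R A : Type*} [CommRing R] [Ring A] [Algebra R A]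
    (σ : A →ₐ[R] A) (δ : Module.End R A) {a b : A} (hσ : σ a = b)
    (hδ : ∀ g, δ (b * g) = g - a * δ g) :
    LinearMap.mulLeft R a * (δ ∘ₗ σ.toLinearMap) + (δ ∘ₗ σ.toLinearMap) * LinearMap.mulLeft R a
      = σ.toLinearMap := by
  ext f
  simp [hσ, hδ]

namespace SkewPoly

variable {n : ℕ}

def orderedMonomial (lam : Fin n → ℕ) : SkewPoly n :=
  ((List.finRange n).map fun j => X j ^ lam j).prod

theorem X_mul_X_of_ne {i j : Fin n} (h : i ≠ j) : X i * X j = -(X j * X i) := by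
  simpa [X] using RingQuot.mkAlgHom_rel ℂ (SkewRel.anticomm i j h)

theorem X_mul_X_pow_of_ne {i j : Fin n} (h : i ≠ j) (m : ℕ) :
    X i * X j ^ m = (-1 : ℂ) ^ m • (X j ^ m * X i) := by
  induction m with
  | zero => simp
  | succ m ih =>
    rw [pow_succ, ← mul_assoc, ih, smul_mul_assoc, mul_assoc, X_mul_X_of_ne h,
      ← neg_one_smul ℂ (X j * X i), mul_smul_comm, smul_smul, ← pow_succ, ← mul_assoc,
      ← pow_succ]

theorem X_mul_prod_map_pow {i : Fin n} (lam : Fin n → ℕ) {l : List (Fin n)}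
    (hl : l.Pairwise (· < ·)) (hi : i ∈ l) :
    X i * (l.map fun j => X j ^ lam j).prod
      = (-1 : ℂ) ^ ((l.filter (· < i)).map lam).sum •
          (l.map fun j => X j ^ Function.update lam i (lam i + 1) j).prod := by
  induction l with
  | nil => simp at hi
  | cons a l ih =>
    obtain ⟨ha, hl⟩ := List.pairwise_cons.mp hl
    rcases List.mem_cons.mp hi with rfl | hi
    · have hfilter : l.filter (· < i) = [] :=
        List.filter_eq_nil_iff.mpr fun b hb => by simpa using (ha b hb).le
      have hmap : l.map (fun j => X j ^ lam j)
          = l.map fun j => X j ^ Function.update lam i (lam i + 1) j :=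
        List.map_congr_left fun b hb => by rw [Function.update_of_ne (ha b hb).ne']
      simp [hfilter, ← hmap, ← mul_assoc, ← pow_succ']
    · have hai : a < i := ha i hi
      rw [List.filter_cons_of_pos (by simpa using hai)]
      simp only [List.map_cons, List.prod_cons, List.sum_cons]
      rw [← mul_assoc, X_mul_X_pow_of_ne hai.ne', smul_mul_assoc, mul_assoc, ih hl hi,
        Function.update_of_ne hai.ne, mul_smul_comm, smul_smul, ← pow_add]

theorem X_mul_orderedMonomial (i : Fin n) (lam : Fin n → ℕ) :
    X i * orderedMonomial lam
      = (-1 : ℂ) ^ (∑ j ∈ Finset.Iio i, lam j) •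
          orderedMonomial (Function.update lam i (lam i + 1)) := by
  have hsum :
      (((List.finRange n).filter (· < i)).map lam).sum = ∑ j ∈ Finset.Iio i, lam j := by
    rw [← List.sum_toFinset lam ((List.nodup_finRange n).filter _)]
    congr 1
    ext j
    simp
  rw [orderedMonomial, X_mul_prod_map_pow lam (List.pairwise_lt_finRange n)
    (List.mem_finRange i), hsum, orderedMonomial]

theorem adjoin_range_X : Algebra.adjoin ℂ (Set.range (X (n := n))) = ⊤ := by
  have hrange : Set.range (X (n := n))
      = RingQuot.mkAlgHom ℂ (SkewRel n) '' Set.range (FreeAlgebra.ι ℂ) := by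
    rw [← Set.range_comp]
    rfl
  rw [hrange, ← AlgHom.map_adjoin, FreeAlgebra.adjoin_range_ι, Algebra.map_top,
    AlgHom.range_eq_top]
  exact RingQuot.mkAlgHom_surjective ℂ _

theorem span_range_orderedMonomial :
    Submodule.span ℂ (Set.range (orderedMonomial (n := n))) = ⊤ := by
  refine Submodule.eq_top_of_one_mem_of_mul_mem adjoin_range_X _ ?_ ?_
  · have h1 : orderedMonomial (fun _ => 0 : Fin n → ℕ) = 1 := by simp [orderedMonomial]
    exact h1 ▸ Submodule.subset_span ⟨_, rfl⟩
  · rintro _ ⟨i, rfl⟩ x hx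
    induction hx using Submodule.span_induction with
    | mem x hx =>
      obtain ⟨lam, rfl⟩ := hx
      rw [X_mul_orderedMonomial]
      exact Submodule.smul_mem _ _ (Submodule.subset_span ⟨_, rfl⟩)
    | zero => simp
    | add a b _ _ ha hb => rw [mul_add]; exact add_mem ha hb
    | smul c a _ ha => rw [mul_smul_comm]; exact Submodule.smul_mem _ _ ha

theorem isHomog_one_X (k : Fin n) : IsHomog 1 (X k) :=
  Submodule.subset_span ⟨[k], rfl, by simp⟩

/-- The shape of `pᵢ` on the ordered monomials. -/
def IsOddPartial (i : Fin n) (P : Module.End ℂ (SkewPoly n)) : Prop :=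
  ∀ lam : Fin n → ℕ, P (orderedMonomial lam)
    = ((lam i : ℂ) * (-1 : ℂ) ^ (∑ j ∈ Finset.Iio i, lam j)) •
        orderedMonomial (Function.update lam i (lam i - 1))

theorem IsOddPartial.mul_mulX {i : Fin n} {P : Module.End ℂ (SkewPoly n)}
    (hP : IsOddPartial i P) : P * mulX i = mulX i * P + 1 := by
  refine LinearMap.ext_on span_range_orderedMonomial ?_
  rintro _ ⟨lam, rfl⟩
  have hIio (v : ℕ) :
      ∑ j ∈ Finset.Iio i, Function.update lam i v j = ∑ j ∈ Finset.Iio i, lam j :=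
    Finset.sum_congr rfl fun j hj => Function.update_of_ne (Finset.mem_Iio.mp hj).ne v lam
  have hsign :
      (-1 : ℂ) ^ (∑ j ∈ Finset.Iio i, lam j) * (-1 : ℂ) ^ (∑ j ∈ Finset.Iio i, lam j) = 1 := by
    rw [← pow_add]
    exact Even.neg_one_pow ⟨_, rfl⟩
  have hraise : P (X i * orderedMonomial lam) = ((lam i : ℂ) + 1) • orderedMonomial lam := by
    rw [X_mul_orderedMonomial, map_smul, hP, hIio, Function.update_self, Function.update_idem,
      Nat.add_sub_cancel, Function.update_eq_self, smul_smul]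
    congr 1
    push_cast
    linear_combination ((lam i : ℂ) + 1) * hsign
  have hlower : X i * P (orderedMonomial lam) = (lam i : ℂ) • orderedMonomial lam := by
    rw [hP, mul_smul_comm, X_mul_orderedMonomial, hIio, Function.update_self,
      Function.update_idem, smul_smul]
    rcases Nat.eq_zero_or_pos (lam i) with h0 | h0
    · simp [h0]
    · rw [Nat.sub_add_cancel h0, Function.update_eq_self]
      congr 1
      linear_combination (lam i : ℂ) * hsign
  simp only [Module.End.mul_apply, LinearMap.add_apply, Module.End.one_apply, mulX,
    LinearMap.mulLeft_apply, hraise, hlower, add_smul, one_smul]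

end SkewPoly

theorem stmt14_general (n : ℕ)
    -- `s i k` is the algebra automorphism of `P⁻` swapping `xᵢ` and `x_k`
    (s : Fin n → Fin n → (SkewPoly n →ₐ[ℂ] SkewPoly n))
    (hs : ∀ i k j : Fin n, i ≠ k → s i k (X j) = X (Equiv.swap i k j))
    -- `pd i k` is the odd divided difference operator `∂_{i,k}`
    (pd : Fin n → Fin n → Module.End ℂ (SkewPoly n))
    (hpdk : ∀ i k : Fin n, i ≠ k → pd i k (X k) = 1)
    (hpdL : ∀ i k : Fin n, i ≠ k → ∀ (d : ℕ) (f g : SkewPoly n), IsHomog d f →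
      pd i k (f * g) = pd i k f * g + (-1 : ℂ) ^ d • (s i k f * pd i k g))
    -- `r i k = ∂_{i,k} ∘ s_{i,k}`
    (r : Fin n → Fin n → Module.End ℂ (SkewPoly n))
    (hr : ∀ i k : Fin n, i ≠ k → r i k = pd i k ∘ₗ (s i k).toLinearMap)
    -- `p i` is the operator `pᵢ`, defined on the monomial basis
    (p : Fin n → Module.End ℂ (SkewPoly n))
    (hp : ∀ (i : Fin n) (lam : Fin n → ℕ),
      p i (((List.finRange n).map fun j => X j ^ lam j).prod)
        = ((lam i : ℂ) * (-1 : ℂ) ^ (∑ j ∈ Finset.Iio i, lam j)) •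
            ((List.finRange n).map fun j => X j ^ (Function.update lam i (lam i - 1)) j).prod)
    (t u : ℂ)
    (D : Fin n → Module.End ℂ (SkewPoly n))
    (hD : ∀ i : Fin n, D i = t • p i + u • ∑ k ∈ Finset.univ \ {i}, r i k)
    (i : Fin n) :
    mulX i * D i + D i * mulX i
      = (2 * t) • (mulX i * p i) + t • (1 : Module.End ℂ (SkewPoly n))
        + u • ∑ k ∈ Finset.univ \ {i}, (s i k).toLinearMap := by
  have hp_mulX : p i * mulX i = mulX i * p i + 1 := SkewPoly.IsOddPartial.mul_mulX (hp i)
  have hr_mulX :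
      ∀ k ∈ Finset.univ \ {i}, mulX i * r i k + r i k * mulX i = (s i k).toLinearMap := by
    intro k hk
    have hik : i ≠ k := by simpa [eq_comm] using hk
    refine hr i k hik ▸ mulLeft_mul_add_mul_mulLeft_eq (s i k) (pd i k)
      (by rw [hs i k i hik, Equiv.swap_apply_left]) fun g => ?_
    rw [hpdL i k hik 1 (X k) g (SkewPoly.isHomog_one_X k), hpdk i k hik, hs i k k hik,
      Equiv.swap_apply_right, one_mul, pow_one]
    module
  rw [hD i, mul_add, add_mul, mul_smul_comm, mul_smul_comm, smul_mul_assoc, smul_mul_assoc,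
    hp_mulX, Finset.mul_sum, Finset.sum_mul, ← Finset.sum_congr rfl hr_mulX,
    Finset.sum_add_distrib]
  module

/-- For each `i`, the operator identity `xᵢ Dᵢ + Dᵢ xᵢ = 2t·xᵢpᵢ + t + u Σ_{k ≠ i} s_{i,k}`. -/
theorem stmt14 (n : ℕ) (hn : 2 ≤ n)
    -- `s i k` is the algebra automorphism of `P⁻` swapping `xᵢ` and `x_k`
    (s : Fin n → Fin n → (SkewPoly n →ₐ[ℂ] SkewPoly n))
    (hs : ∀ i k j : Fin n, i ≠ k → s i k (X j) = X (Equiv.swap i k j))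
    -- `τ i` is the algebra automorphism of `P⁻` sending `xᵢ` to `-xᵢ` and fixing the others
    (τ : Fin n → (SkewPoly n →ₐ[ℂ] SkewPoly n))
    (hτ : ∀ i j : Fin n, τ i (X j) = if j = i then -X j else X j)
    -- `pd i k` is the odd divided difference operator `∂_{i,k}`
    (pd : Fin n → Fin n → Module.End ℂ (SkewPoly n))
    (hpdi : ∀ i k : Fin n, i ≠ k → pd i k (X i) = 1)
    (hpdk : ∀ i k : Fin n, i ≠ k → pd i k (X k) = 1)
    (hpd0 : ∀ i k j : Fin n, i ≠ k → j ≠ i → j ≠ k → pd i k (X j) = 0)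
    (hpdL : ∀ i k : Fin n, i ≠ k → ∀ (d : ℕ) (f g : SkewPoly n), IsHomog d f →
      pd i k (f * g) = pd i k f * g + (-1 : ℂ) ^ d • (s i k f * pd i k g))
    -- `r i k = ∂_{i,k} ∘ s_{i,k}`
    (r : Fin n → Fin n → Module.End ℂ (SkewPoly n))
    (hr : ∀ i k : Fin n, i ≠ k → r i k = pd i k ∘ₗ (s i k).toLinearMap)
    -- `p i` is the operator `pᵢ`, defined on the monomial basis
    (p : Fin n → Module.End ℂ (SkewPoly n))
    (hp : ∀ (i : Fin n) (lam : Fin n → ℕ),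
      p i (((List.finRange n).map fun j => X j ^ lam j).prod)
        = ((lam i : ℂ) * (-1 : ℂ) ^ (∑ j ∈ Finset.Iio i, lam j)) •
            ((List.finRange n).map fun j => X j ^ (Function.update lam i (lam i - 1)) j).prod)
    (t u : ℂ)
    (D : Fin n → Module.End ℂ (SkewPoly n))
    (hD : ∀ i : Fin n, D i = t • p i + u • ∑ k ∈ Finset.univ \ {i}, r i k)
    (i : Fin n) :
    mulX i * D i + D i * mulX i
      = (2 * t) • (mulX i * p i) + t • (1 : Module.End ℂ (SkewPoly n))
        + u • ∑ k ∈ Finset.univ \ {i}, (s i k).toLinearMap :=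
  stmt14_general n s hs pd hpdk hpdL r hr p hp t u D hD i
end
end
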